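/- Let P(λ) = Σ_{j=0}^{k} A_j φ_j(λ) be a regular n×n complex matrix polynomial of degree k expressed in a polynomial basis {φ_0,…,φ_k} such that φ_0,…,φ_{k−1} are linearly independent polynomials of degree at most k−1, let c_{k−1} ≠ 0 be the leading coefficient of φ_{k−1}, let Φ(λ) = (φ_0(λ),…,φ_{k−1}(λ))^T, and let L(λ) = λX + Y satisfy L(λ)·(Φ(λ)⊗I_n) = c_{k−1} v ⊗ P(λ) for some nonzero v ∈ ℂ^k. Then for λ_0 ∈ ℂ and x ∈ ℂ^n, x ≠ 0: the vector Φ(λ_0)⊗x is a nonzero vector in the kernel of L(λ_0) if and only if P(λ_0)x = 0. Moreover, if L is a linearization of P, then every vector in the kernel of L(λ_0) has the form Φ(λ_0)⊗x for some x with P(λ_0)x = 0. -/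
import Mathlib


open Matrix Polynomial

/-- `diag(P, I_{(k-1)n})`, indexed by `Fin k × Fin n`: the `(0,0)` block (in the block
index) carries `P`, and the rest is the identity. -/
noncomputable def diagPI {n k : ℕ} (P : Matrix (Fin n) (Fin n) (Polynomial ℂ)) :
    Matrix (Fin k × Fin n) (Fin k × Fin n) (Polynomial ℂ) :=
  Matrix.of fun p q =>
    if p.1.val = 0 ∧ q.1.val = 0 then P p.2 q.2 else if p = q then 1 else 0

/-- `L` is a linearization of the `n×n` matrix polynomial `P` of degree `k`:
there are unimodular matrix polynomials `E, F` with `E·L·F = diag(P, I_{(k-1)n})`. -/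
def IsLinearization {n k : ℕ} (L : Matrix (Fin k × Fin n) (Fin k × Fin n) (Polynomial ℂ))
    (P : Matrix (Fin n) (Fin n) (Polynomial ℂ)) : Prop :=
  ∃ E F : Matrix (Fin k × Fin n) (Fin k × Fin n) (Polynomial ℂ),
    IsUnit E.det ∧ IsUnit F.det ∧ E * L * F = diagPI P

lemma ker_conj_finrank {m : Type*} [Fintype m] [DecidableEq m]
    (E M F : Matrix m m ℂ) (hE : IsUnit E.det) (hF : IsUnit F.det) :
    Module.finrank ℂ (LinearMap.ker (E * M * F).mulVecLin)
      = Module.finrank ℂ (LinearMap.ker M.mulVecLin) := by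
  have hFbij : Function.Bijective F.mulVecLin := by
    constructor
    · intro u w h
      have h2 := congrArg (F⁻¹.mulVecLin) h
      simpa [Matrix.mulVecLin_apply, Matrix.mulVec_mulVec, Matrix.nonsing_inv_mul F hF] using h2
    · intro y
      exact ⟨F⁻¹.mulVecLin y, by
        simp [Matrix.mulVecLin_apply, Matrix.mulVec_mulVec, Matrix.mul_nonsing_inv F hF]⟩
  have hEinj : LinearMap.ker E.mulVecLin = ⊥ := by
    rw [LinearMap.ker_eq_bot]
    intro u w h
    have h2 := congrArg (E⁻¹.mulVecLin) h
    simpa [Matrix.mulVecLin_apply, Matrix.mulVec_mulVec, Matrix.nonsing_inv_mul E hE] using h2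
  have h1 : (E * M * F).mulVecLin = E.mulVecLin ∘ₗ (M.mulVecLin ∘ₗ F.mulVecLin) := by
    rw [mul_assoc, Matrix.mulVecLin_mul, Matrix.mulVecLin_mul]
  rw [h1, ← LinearMap.comp_assoc, LinearMap.ker_comp,
    LinearMap.ker_comp_of_ker_eq_bot _ hEinj]
  let eF : (m → ℂ) ≃ₗ[ℂ] (m → ℂ) := LinearEquiv.ofBijective F.mulVecLin hFbij
  have h3 : Submodule.comap F.mulVecLin (LinearMap.ker M.mulVecLin)
      = Submodule.map (eF.symm : (m → ℂ) →ₗ[ℂ] (m → ℂ)) (LinearMap.ker M.mulVecLin) := by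
    rw [← Submodule.comap_equiv_eq_map_symm]; rfl
  rw [h3]
  exact (LinearEquiv.finrank_eq
    ((LinearMap.ker M.mulVecLin).equivMapOfInjective _ eF.symm.injective)).symm

lemma exists_eval_ne_zero {k : ℕ} (hk : 0 < k) (φ : Fin k → Polynomial ℂ)
    (hdeg : ∀ j, (φ j).natDegree ≤ k - 1)
    (hind : LinearIndependent ℂ φ) (lam : ℂ) :
    ∃ j, (φ j).eval lam ≠ 0 := by
  by_contra h
  push_neg at h
  have hmem : ∀ j, φ j ∈ Polynomial.degreeLT ℂ k := by
    intro j
    rw [Polynomial.mem_degreeLT]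
    calc (φ j).degree ≤ ((φ j).natDegree : WithBot ℕ) := Polynomial.degree_le_natDegree
      _ ≤ ((k - 1 : ℕ) : WithBot ℕ) := by exact_mod_cast hdeg j
      _ < (k : WithBot ℕ) := by exact_mod_cast Nat.sub_lt hk one_pos
  haveI : Module.Finite ℂ (Polynomial.degreeLT ℂ k) :=
    Module.Finite.equiv (Polynomial.degreeLTEquiv ℂ k).symm
  have hfr : Module.finrank ℂ (Polynomial.degreeLT ℂ k) = k := by
    rw [(Polynomial.degreeLTEquiv ℂ k).finrank_eq, Module.finrank_fintype_fun_eq_card,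
      Fintype.card_fin]
  set ψ : Fin k → Polynomial.degreeLT ℂ k := fun j => ⟨φ j, hmem j⟩ with hψ
  have hindψ : LinearIndependent ℂ ψ := by
    apply LinearIndependent.of_comp (Polynomial.degreeLT ℂ k).subtype
    exact hind
  haveI : Nonempty (Fin k) := ⟨⟨0, hk⟩⟩
  have hspan : Submodule.span ℂ (Set.range ψ) = ⊤ :=
    hindψ.span_eq_top_of_card_eq_finrank (by simp [hfr])
  have hone : (1 : Polynomial ℂ) ∈ Polynomial.degreeLT ℂ k := by
    rw [Polynomial.mem_degreeLT, Polynomial.degree_one]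
    exact_mod_cast hk
  have hmem1 : (⟨1, hone⟩ : Polynomial.degreeLT ℂ k) ∈ Submodule.span ℂ (Set.range ψ) := by
    rw [hspan]; trivial
  rw [Submodule.mem_span_range_iff_exists_fun] at hmem1
  obtain ⟨cf, hcf⟩ := hmem1
  have h1 : (1 : ℂ) = ∑ j, cf j * (φ j).eval lam := by
    have h2 := congrArg (fun q : Polynomial.degreeLT ℂ k =>
      Polynomial.eval lam (q : Polynomial ℂ)) hcf
    simpa [Polynomial.eval_finset_sum] using h2.symm
  simp [h] at h1

/-- **Eigenvector correspondence and recovery for ansatz-space pencils.**  With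
`P(λ) = Σ A_j φ_j(λ)` regular and `L(λ) = λX + Y` satisfying
`L(λ)·(Φ(λ)⊗Iₙ) = c·v ⊗ P(λ)` with `v ≠ 0`: for `x ≠ 0`, the vector `Φ(λ₀)⊗x` is a
nonzero kernel vector of `L(λ₀)` iff `P(λ₀)x = 0`; moreover if `L` is a linearization of
`P`, every kernel vector of `L(λ₀)` has the form `Φ(λ₀)⊗x` with `P(λ₀)x = 0`. -/
theorem stmt2 (n k : ℕ) (hn : 0 < n) (hk : 0 < k)
    (φ : Fin (k + 1) → Polynomial ℂ)
    (hφdeg : ∀ j : Fin k, (φ j.castSucc).natDegree ≤ k - 1)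
    (hφind : LinearIndependent ℂ fun j : Fin k => φ j.castSucc)
    (hφk : (φ (Fin.last k)).natDegree = k)
    (c : ℂ) (hc : c ≠ 0)
    (hck : (φ (⟨k - 1, by omega⟩ : Fin (k + 1))).coeff (k - 1) = c)
    (A : Fin (k + 1) → Matrix (Fin n) (Fin n) ℂ)
    (hAk : A (Fin.last k) ≠ 0)
    (P : Matrix (Fin n) (Fin n) (Polynomial ℂ))
    (hP : P = Matrix.of fun a b => ∑ j : Fin (k + 1), Polynomial.C (A j a b) * φ j)
    (hreg : P.det ≠ 0)
    (Xm Ym : Matrix (Fin k × Fin n) (Fin k × Fin n) ℂ)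
    (L : Matrix (Fin k × Fin n) (Fin k × Fin n) (Polynomial ℂ))
    (hL : L = Matrix.of fun p q =>
      Polynomial.C (Xm p q) * Polynomial.X + Polynomial.C (Ym p q))
    (Φmat : Matrix (Fin k × Fin n) (Fin n) (Polynomial ℂ))
    (hΦ : Φmat = Matrix.of fun p b => if p.2 = b then φ p.1.castSucc else 0)
    (v : Fin k → ℂ) (hv : v ≠ 0)
    (hansatz : L * Φmat = Matrix.of fun p b => Polynomial.C (c * v p.1) * P p.2 b) :
    (∀ (lam : ℂ) (x : Fin n → ℂ), x ≠ 0 →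
        (((fun p : Fin k × Fin n => (φ p.1.castSucc).eval lam * x p.2) ≠ 0 ∧
            (L.map (Polynomial.eval lam)).mulVec
              (fun p : Fin k × Fin n => (φ p.1.castSucc).eval lam * x p.2) = 0) ↔
          (P.map (Polynomial.eval lam)).mulVec x = 0)) ∧
      (IsLinearization L P →
        ∀ (lam : ℂ) (w : Fin k × Fin n → ℂ),
          (L.map (Polynomial.eval lam)).mulVec w = 0 →
          ∃ x : Fin n → ℂ, (P.map (Polynomial.eval lam)).mulVec x = 0 ∧
            w = fun p : Fin k × Fin n => (φ p.1.castSucc).eval lam * x p.2) := by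
  -- the key mulVec identity from the ansatz equation
  have hkey : ∀ (lam : ℂ) (x : Fin n → ℂ),
      (L.map (Polynomial.eval lam)).mulVec
          (fun p : Fin k × Fin n => (φ p.1.castSucc).eval lam * x p.2)
        = fun p => c * v p.1 * ((P.map (Polynomial.eval lam)).mulVec x p.2) := by
    intro lam x
    have hu : (fun p : Fin k × Fin n => (φ p.1.castSucc).eval lam * x p.2)
        = (Φmat.map (Polynomial.eval lam)).mulVec x := by
      funext p
      simp [hΦ, Matrix.mulVec, Matrix.map_apply, dotProduct,
        apply_ite (Polynomial.eval lam), ite_mul]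
    rw [hu, Matrix.mulVec_mulVec]
    have hmap : (L.map (Polynomial.eval lam)) * (Φmat.map (Polynomial.eval lam))
        = (L * Φmat).map (Polynomial.eval lam) :=
      (Matrix.map_mul (f := Polynomial.evalRingHom lam)).symm
    rw [hmap, hansatz]
    funext p
    simp [Matrix.mulVec, dotProduct, Matrix.map_apply, Finset.mul_sum, mul_assoc]
  obtain ⟨i, hvi⟩ : ∃ i, v i ≠ 0 := by
    by_contra hco; push_neg at hco; exact hv (funext hco)
  constructor
  · intro lam x hx
    constructor
    · rintro ⟨-, hker⟩
      rw [hkey lam x] at hker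
      funext b
      have h3 := congrFun hker (i, b)
      simpa [mul_eq_zero, hc, hvi] using h3
    · intro hPx
      refine ⟨?_, ?_⟩
      · obtain ⟨j, hj⟩ := exists_eval_ne_zero hk (fun j => φ j.castSucc) hφdeg hφind lam
        obtain ⟨a, ha⟩ : ∃ a, x a ≠ 0 := by
          by_contra hco; push_neg at hco; exact hx (funext hco)
        intro h0
        have h4 := congrFun h0 (j, a)
        simp only [Pi.zero_apply, mul_eq_zero] at h4
        tauto
      · rw [hkey lam x]
        funext p
        simp [hPx]
  · rintro ⟨E, F, hE, hF, hEF⟩ lam w hw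
    set z0 : Fin k := ⟨0, hk⟩ with hz0
    set P₀ := P.map (Polynomial.eval lam) with hP₀
    set L₀ := L.map (Polynomial.eval lam) with hL₀
    set E₀ := E.map (Polynomial.eval lam) with hE₀
    set F₀ := F.map (Polynomial.eval lam) with hF₀
    set D₀ := (diagPI P : Matrix (Fin k × Fin n) (Fin k × Fin n) (Polynomial ℂ)).map
      (Polynomial.eval lam) with hD₀def
    have h0 : E₀ * L₀ * F₀ = D₀ := by
      rw [hE₀, hL₀, hF₀, hD₀def, ← hEF, ← Polynomial.coe_evalRingHom,
        Matrix.map_mul (f := Polynomial.evalRingHom lam),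
        Matrix.map_mul (f := Polynomial.evalRingHom lam)]
    have hEu : IsUnit E₀.det := by
      have h1 := hE.map (Polynomial.evalRingHom lam)
      rwa [RingHom.map_det] at h1
    have hFu : IsUnit F₀.det := by
      have h1 := hF.map (Polynomial.evalRingHom lam)
      rwa [RingHom.map_det] at h1
    -- entries of D₀
    have hD₀ : ∀ p q : Fin k × Fin n, D₀ p q =
        if p.1.val = 0 ∧ q.1.val = 0 then P₀ p.2 q.2 else if p = q then 1 else 0 := by
      intro p q
      rw [hD₀def, Matrix.map_apply, hP₀]
      show Polynomial.eval lam
        (if p.1.val = 0 ∧ q.1.val = 0 then P p.2 q.2 else if p = q then 1 else 0) = _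
      split_ifs with h1 h2
      · rfl
      · exact Polynomial.eval_one
      · exact Polynomial.eval_zero
    -- mulVec of D₀
    have hDval : ∀ (u : Fin k × Fin n → ℂ) (p : Fin k × Fin n),
        D₀.mulVec u p = if p.1 = z0
          then (P₀.mulVec (fun b => u (z0, b))) p.2 else u p := by
      intro u p
      by_cases hp : p.1 = z0
      · rw [if_pos hp]
        have hpv : p.1.val = 0 := by rw [hp]
        simp only [Matrix.mulVec, dotProduct, Fintype.sum_prod_type]
        rw [Finset.sum_eq_single z0]
        · apply Finset.sum_congr rfl
          intro b _
          rw [hD₀]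
          simp [hpv, hz0]
        · intro i _ hi
          apply Finset.sum_eq_zero
          intro b _
          rw [hD₀]
          have h1 : ¬ ((i : Fin k).val = 0) := by
            intro h2; exact hi (Fin.ext (by simpa using h2))
          have h2 : p ≠ (i, b) := by
            intro h3; apply hi; rw [← hp, h3]
          simp [h1, h2]
        · intro hmem; exact absurd (Finset.mem_univ _) hmem
      · rw [if_neg hp]
        have hpv : ¬ p.1.val = 0 := by
          intro h1; exact hp (Fin.ext (by simpa [hz0] using h1))
        simp only [Matrix.mulVec, dotProduct]
        rw [Finset.sum_eq_single p]
        · rw [hD₀]; simp [hpv]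
        · intro q _ hq
          rw [hD₀]
          simp [hpv, Ne.symm hq]
        · intro hmem; exact absurd (Finset.mem_univ _) hmem
    -- the embedding of the first block
    let ι : (Fin n → ℂ) →ₗ[ℂ] (Fin k × Fin n → ℂ) :=
      { toFun := fun x p => if p.1 = z0 then x p.2 else 0
        map_add' := by intro x y; funext p; by_cases h : p.1 = z0 <;> simp [h]
        map_smul' := by intro a x; funext p; by_cases h : p.1 = z0 <;> simp [h] }
    have hιinj : Function.Injective ι := by
      intro x y h
      funext b
      have h1 := congrFun h (z0, b)
      simpa [ι] using h1
    have hkerD : LinearMap.ker D₀.mulVecLin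
        = Submodule.map ι (LinearMap.ker P₀.mulVecLin) := by
      ext u
      constructor
      · intro hu
        have hu' : D₀.mulVec u = 0 := hu
        refine ⟨fun b => u (z0, b), ?_, ?_⟩
        · show P₀.mulVec (fun b => u (z0, b)) = 0
          funext b
          have h1 := congrFun hu' (z0, b)
          rw [hDval] at h1
          simpa using h1
        · funext p
          by_cases hp : p.1 = z0
          · have : (z0, p.2) = p := by
              rw [← hp]
            simp [ι, hp, this]
          · have h1 := congrFun hu' p
            rw [hDval, if_neg hp] at h1
            simpa [ι, hp] using h1.symm
      · rintro ⟨x, hx, rfl⟩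
        have hx' : P₀.mulVec x = 0 := hx
        show D₀.mulVec (ι x) = 0
        funext p
        rw [hDval]
        by_cases hp : p.1 = z0
        · rw [if_pos hp]
          have : (fun b => ι x (z0, b)) = x := by
            funext b; simp [ι]
          rw [this, hx']
          rfl
        · rw [if_neg hp]
          simp [ι, hp]
    -- the map x ↦ Φ(λ)⊗x
    let T : (Fin n → ℂ) →ₗ[ℂ] (Fin k × Fin n → ℂ) :=
      { toFun := fun x p => (φ p.1.castSucc).eval lam * x p.2
        map_add' := by intro x y; funext p; simp [mul_add]
        map_smul' := by intro a x; funext p; simp [smul_eq_mul]; ring }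
    obtain ⟨j, hj⟩ := exists_eval_ne_zero hk (fun j => φ j.castSucc) hφdeg hφind lam
    have hTinj : Function.Injective T := by
      intro x y h
      funext b
      have h1 := congrFun h (j, b)
      exact mul_left_cancel₀ hj h1
    have hTle : Submodule.map T (LinearMap.ker P₀.mulVecLin) ≤ LinearMap.ker L₀.mulVecLin := by
      rintro _ ⟨x, hx, rfl⟩
      have hx' : P₀.mulVec x = 0 := hx
      show L₀.mulVec (T x) = 0
      have : T x = fun p : Fin k × Fin n => (φ p.1.castSucc).eval lam * x p.2 := rfl
      rw [this, hL₀, hkey lam x]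
      funext p
      simp [← hP₀, hx']
    have hfr1 : Module.finrank ℂ (LinearMap.ker D₀.mulVecLin)
        = Module.finrank ℂ (LinearMap.ker L₀.mulVecLin) := by
      rw [← h0]; exact ker_conj_finrank E₀ L₀ F₀ hEu hFu
    have hfr2 : Module.finrank ℂ (LinearMap.ker D₀.mulVecLin)
        = Module.finrank ℂ (LinearMap.ker P₀.mulVecLin) := by
      rw [hkerD]
      exact (LinearEquiv.finrank_eq
        ((LinearMap.ker P₀.mulVecLin).equivMapOfInjective _ hιinj)).symm
    have hfr3 : Module.finrank ℂ (Submodule.map T (LinearMap.ker P₀.mulVecLin))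
        = Module.finrank ℂ (LinearMap.ker L₀.mulVecLin) := by
      rw [← hfr1, hfr2]
      exact (LinearEquiv.finrank_eq
        ((LinearMap.ker P₀.mulVecLin).equivMapOfInjective _ hTinj)).symm
    have heq : Submodule.map T (LinearMap.ker P₀.mulVecLin) = LinearMap.ker L₀.mulVecLin :=
      Submodule.eq_of_le_of_finrank_eq hTle hfr3
    have hwmem : w ∈ LinearMap.ker L₀.mulVecLin := hw
    rw [← heq] at hwmem
    obtain ⟨x, hx, hxw⟩ := hwmem
    exact ⟨x, hx, hxw.symm⟩
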